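/- arXiv:2605.22964 — 6 statements merged into one kernel-verified Lean document; each statement's English description precedes it below -/
import Mathlib

section
/- Halving lemma: Let X be a domain and let H be a finite nonempty set of functions from X to Bool. Then there exists f ∈ H such that cert(f, H) ≤ ⌈log₂ |H|⌉. -/
/-- `S` is an input-output certificate for `f` in `H`: every `h ∈ H` agreeing with
`f` on all points of `S` agrees with `f` everywhere. -/
def IsCert {X : Type*} (H : Set (X → Bool)) (f : X → Bool) (S : Finset X) : Prop :=
  ∀ h ∈ H, (∀ x ∈ S, h x = f x) → ∀ x, h x = f x

/-- The certificate size: the minimum cardinality of an input-output certificate. -/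
noncomputable def cert {X : Type*} (H : Set (X → Bool)) (f : X → Bool) : ℕ :=
  sInf {k : ℕ | ∃ S : Finset X, S.card = k ∧ IsCert H f S}

lemma aux {X : Type*} : ∀ n (H : Finset (X → Bool)), H.card ≤ n → H.Nonempty →
    ∃ f ∈ H, ∃ S : Finset X, S.card ≤ Nat.clog 2 H.card ∧ IsCert (↑H) f S := by
  intro n
  induction n with
  | zero => intro H h hne
            exact absurd (Finset.card_eq_zero.mp (Nat.le_zero.mp h)) (Finset.nonempty_iff_ne_empty.mp hne)
  | succ n ih =>
    intro H hcard hne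
    haveI : DecidableEq X := Classical.decEq X
    by_cases h1 : H.card ≤ 1
    · obtain ⟨f, hf⟩ := Finset.card_eq_one.mp (le_antisymm h1 (Finset.card_pos.mpr hne))
      refine ⟨f, by simp [hf], ∅, by simp, ?_⟩
      intro h hh _ x
      simp only [hf, Finset.coe_singleton, Set.mem_singleton_iff] at hh
      simp [hh]
    · push_neg at h1
      obtain ⟨f₀, hf₀, g, hg, hfg⟩ := Finset.one_lt_card.mp h1
      obtain ⟨x, hx⟩ : ∃ x, f₀ x ≠ g x := by
        by_contra hc; push_neg at hc; exact hfg (funext hc)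
      have hsum : (H.filter (fun h => h x = f₀ x)).card
          + (H.filter (fun h => h x = g x)).card = H.card := by
        have heq : H.filter (fun h => ¬ h x = f₀ x) = H.filter (fun h => h x = g x) := by
          apply Finset.filter_congr
          intro h _
          cases hb : h x <;> cases hb0 : f₀ x <;> cases hbg : g x <;> simp_all
        rw [← heq]
        exact Finset.card_filter_add_card_filter_not (fun h : X → Bool => h x = f₀ x)
      obtain ⟨v, hvne, hvsmall⟩ : ∃ v : Bool,
          (H.filter (fun h => h x = v)).Nonempty ∧
          2 * (H.filter (fun h => h x = v)).card ≤ H.card := by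
        rcases le_total (H.filter (fun h => h x = f₀ x)).card
            (H.filter (fun h => h x = g x)).card with hle | hle
        · exact ⟨f₀ x, ⟨f₀, Finset.mem_filter.mpr ⟨hf₀, rfl⟩⟩, by linarith⟩
        · exact ⟨g x, ⟨g, Finset.mem_filter.mpr ⟨hg, rfl⟩⟩, by linarith⟩
      set H' := H.filter (fun h => h x = v) with hH'
      have hpos : 1 ≤ H'.card := Finset.card_pos.mpr hvne
      have hH'lt : H'.card < H.card := by linarith
      obtain ⟨f, hfH', S, hScard, hScert⟩ := ih H' (by linarith) hvne
      have hfH : f ∈ H := (Finset.mem_filter.mp hfH').1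
      have hfx : f x = v := (Finset.mem_filter.mp hfH').2
      refine ⟨f, hfH, insert x S, ?_, ?_⟩
      · have h1' : (insert x S).card ≤ S.card + 1 := Finset.card_insert_le _ _
        have hmono : Nat.clog 2 H'.card ≤ Nat.clog 2 ((H.card + 1) / 2) := by
          apply Nat.clog_mono_right
          have := Nat.div_le_div_right (c := 2) (by linarith : 2 * H'.card ≤ H.card + 1)
          simpa using this
        have hrec : Nat.clog 2 H.card = Nat.clog 2 ((H.card + 2 - 1) / 2) + 1 :=
          Nat.clog_of_two_le (by norm_num) h1
        have h21 : H.card + 2 - 1 = H.card + 1 := rfl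
        rw [h21] at hrec
        linarith
      · intro h hh hag y
        have hhx : h x = v := by rw [hag x (Finset.mem_insert_self _ _), hfx]
        have hhH' : h ∈ H' := Finset.mem_filter.mpr ⟨hh, hhx⟩
        exact hScert h hhH' (fun z hz => hag z (Finset.mem_insert_of_mem hz)) y

/-- **Halving lemma.** Every finite nonempty hypothesis class `H` of functions
`X → Bool` contains a hypothesis `f` with certificate size at most `⌈log₂ |H|⌉`. -/
theorem stmt1 {X : Type*} (H : Finset (X → Bool)) (hH : H.Nonempty) :
    ∃ f ∈ H, cert (↑H : Set (X → Bool)) f ≤ Nat.clog 2 H.card := by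
  obtain ⟨f, hf, S, hS, hcert⟩ := aux H.card H le_rfl hH
  exact ⟨f, hf, le_trans (Nat.sInf_le ⟨S, rfl, hcert⟩) hS⟩
end

section
/- Approximate certification lower bound, absolute error: Let X = {0,1}^n, let H be a set of functions X → Bool containing f⋆, fix a nonempty set I ⊆ [n] of t trigger coordinates, and for each pattern π ∈ {0,1}^I let B_π = {x ∈ X : x restricted to I equals π}. Suppose for every π there exists g_π ∈ H whose disagreement set E_π = {x : g_π(x) ≠ f⋆(x)} satisfies E_π ⊆ B_π and |E_π| ≥ 2^{n−t−1}. Then for every natural number R with R < 2^{n−t−1}, cert_R(f⋆, H) ≥ 2^t. -/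
/-- The absolute error `Δ(h)`: the number of points of the domain on which `h`
disagrees with the target `f`. -/
def errCount {n : ℕ} (f h : (Fin n → Bool) → Bool) : ℕ :=
  (Finset.univ.filter fun x : Fin n → Bool => h x ≠ f x).card

/-- `cert_R(f, H)`: the minimum cardinality of a set `S ⊆ {0,1}ⁿ` such that every
`h ∈ H` agreeing with `f` on `S` makes at most `R` mistakes on the whole domain. -/
noncomputable def certAbs {n : ℕ} (H : Set ((Fin n → Bool) → Bool))
    (f : (Fin n → Bool) → Bool) (R : ℕ) : ℕ :=
  sInf {k : ℕ | ∃ S : Finset (Fin n → Bool), S.card = k ∧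
    ∀ h ∈ H, (∀ x ∈ S, h x = f x) → errCount f h ≤ R}

/-- **Approximate certification lower bound, absolute error.** Fix a nonempty trigger
set `I ⊆ [n]` of size `t`. If for every pattern `π` there is a deceiver `g ∈ H` whose
disagreement set with `f` is contained in the trigger block `B_π` and has size at least
`2^(n−t−1)`, then for every natural number `R < 2^(n−t−1)` we have `cert_R(f, H) ≥ 2^t`. -/
theorem stmt3 {n : ℕ} (H : Set ((Fin n → Bool) → Bool)) (f : (Fin n → Bool) → Bool)
    (hf : f ∈ H) (I : Finset (Fin n)) (hI : I.Nonempty)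
    (hdec : ∀ π : Fin n → Bool, ∃ g ∈ H,
      (∀ x : Fin n → Bool, g x ≠ f x → ∀ i ∈ I, x i = π i) ∧
      2 ^ (n - I.card - 1) ≤ errCount f g)
    (R : ℕ) (hR : R < 2 ^ (n - I.card - 1)) :
    2 ^ I.card ≤ certAbs H f R := by
  apply le_csInf
  · refine ⟨(Finset.univ : Finset (Fin n → Bool)).card, Finset.univ, rfl, ?_⟩
    intro h _ hagree
    have : errCount f h = 0 := by
      unfold errCount
      simp only [Finset.card_eq_zero, Finset.filter_eq_empty_iff]
      intro x _
      simp [hagree x (Finset.mem_univ x)]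
    omega
  · rintro k ⟨S, rfl, hS⟩
    -- The restriction map S → (I → Bool) is surjective.
    have hsurj : Set.SurjOn (fun x : Fin n → Bool => fun i : I => x i) ↑S
        (Finset.univ : Finset (↥I → Bool)) := by
      intro π' _
      set π : Fin n → Bool := fun i => if h : i ∈ I then π' ⟨i, h⟩ else false with hπdef
      obtain ⟨g, hgH, hblock, hcount⟩ := hdec π
      have hnotagree : ¬ (∀ x ∈ S, g x = f x) := by
        intro hag
        have := hS g hgH hag
        omega
      push_neg at hnotagree
      obtain ⟨x, hxS, hx⟩ := hnotagree
      refine ⟨x, hxS, ?_⟩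
      funext i
      have := hblock x hx i i.2
      simp only [hπdef] at this
      simpa [dif_pos i.2] using this
    have hcard := Finset.card_le_card_of_surjOn _ hsurj
    calc 2 ^ I.card = Fintype.card (↥I → Bool) := by
          simp [Fintype.card_fun]
      _ = (Finset.univ : Finset (↥I → Bool)).card := (Finset.card_univ).symm
      _ ≤ S.card := hcard
end

section
/- Block-override certification hardness: Let n ≥ 1, let f⋆ : {0,1}^n → Bool, and let I ⊆ Fin n with |I| = t ≥ 1. Suppose H is a set of functions {0,1}^n → Bool that contains f⋆ and, for every pattern π : I → {0,1} and every σ ∈ Bool, contains the block override g_{π,σ} defined by g_{π,σ}(x) = σ if x_i = π_i for all i ∈ I, and g_{π,σ}(x) = f⋆(x) otherwise. Then cert(f⋆, H) ≥ 2^t. -/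
/-- **Block-override certification hardness.** Let `I ⊆ Fin n` have size `t ≥ 1`. If the
hypothesis class `H` contains the target `f` together with every block override
`g_{π,σ}` (equal to the constant `σ` on the trigger block `{x : x_i = π_i ∀ i ∈ I}`
and equal to `f` elsewhere), then `cert(f, H) ≥ 2^t`. -/
theorem stmt7 {n : ℕ} (hn : 1 ≤ n) (f : (Fin n → Bool) → Bool)
    (I : Finset (Fin n)) (hI : 1 ≤ I.card)
    (H : Set ((Fin n → Bool) → Bool)) (hf : f ∈ H)
    (hov : ∀ (π : Fin n → Bool) (σ : Bool),
      (fun x => if ∀ i ∈ I, x i = π i then σ else f x) ∈ H) :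
    2 ^ I.card ≤ cert H f := by
  have key : ∀ S : Finset (Fin n → Bool), IsCert H f S → 2 ^ I.card ≤ S.card := by
    intro S hS
    have hsurj : ∀ p : (↥I → Bool), ∃ x ∈ S, ∀ i, ∀ hi : i ∈ I, x i = p ⟨i, hi⟩ := by
      intro p
      by_contra hc
      push_neg at hc
      set π : Fin n → Bool := fun i => if h : i ∈ I then p ⟨i, h⟩ else false with hπ
      have hg := hov π (!f π)
      have hagree : ∀ x ∈ S, (fun x => if ∀ i ∈ I, x i = π i then !f π else f x) x = f x := by
        intro x hx
        simp only
        rw [if_neg]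
        intro hall
        obtain ⟨i, hi, hne⟩ := hc x hx
        apply hne
        have := hall i hi
        rw [this, hπ]
        simp [hi]
      have := hS _ hg hagree π
      simp at this
    have hsurj' : Function.Surjective (fun (x : ↥S) (i : ↥I) => (x : Fin n → Bool) i) := by
      intro p
      obtain ⟨x, hx, h⟩ := hsurj p
      exact ⟨⟨x, hx⟩, funext fun i => h i i.2⟩
    calc 2 ^ I.card = Fintype.card (↥I → Bool) := by simp
      _ ≤ Fintype.card ↥S := Fintype.card_le_of_surjective _ hsurj'
      _ = S.card := Fintype.card_coe S
  apply le_csInf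
  · exact ⟨(Finset.univ : Finset (Fin n → Bool)).card, Finset.univ, rfl,
      fun h _ hag x => hag x (Finset.mem_univ x)⟩
  · rintro b ⟨S, rfl, hcert⟩
    exact key S hcert
end

section
/- Certification of OR_n in the restricted depth-2 threshold base class: Let n ≥ 1 and let H be the set of all functions h : {0,1}^n → Bool of the form h(x) = 1 iff Σ_i a_i x_i + b·z(x) ≥ θ, where z(x) = 1 iff Σ_i c_i x_i ≥ τ, with coefficients a_i, b, c_i ∈ {−1, 0, 1}, integer thresholds θ ∈ [−(n+1), n+1] and τ ∈ [−n, n], and bits viewed as integers. Then cert(OR_n, H) = n + 1, and the labeled set S = {0^n, e₁, …, e_n} (the all-zeros vector together with the n one-hot vectors) is an input-output certificate for OR_n in H. -/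
/-- Bits viewed as integers. -/
def b2z (b : Bool) : ℤ := if b then 1 else 0

/-- `OR_n(x) = 1` iff `x₁ + ⋯ + x_n ≥ 1`. -/
def ORn (n : ℕ) : (Fin n → Bool) → Bool := fun x => decide (1 ≤ ∑ i, b2z (x i))

/-- The restricted depth-2 threshold base class: functions
`h(x) = 1 iff Σ_i a_i x_i + b·z(x) ≥ θ` with hidden gate `z(x) = 1 iff Σ_i c_i x_i ≥ τ`,
where all weights lie in `{-1,0,1}`, `θ ∈ [-(n+1), n+1]` and `τ ∈ [-n, n]`. -/
def Hthr (n : ℕ) : Set ((Fin n → Bool) → Bool) :=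
  {h | ∃ (a c : Fin n → ℤ) (b θ τ : ℤ),
    (∀ i, a i = -1 ∨ a i = 0 ∨ a i = 1) ∧
    (∀ i, c i = -1 ∨ c i = 0 ∨ c i = 1) ∧
    (b = -1 ∨ b = 0 ∨ b = 1) ∧
    -((n : ℤ) + 1) ≤ θ ∧ θ ≤ (n : ℤ) + 1 ∧ -(n : ℤ) ≤ τ ∧ τ ≤ (n : ℤ) ∧
    ∀ x, h x = decide (θ ≤ (∑ i, a i * b2z (x i)) +
      b * (if τ ≤ ∑ i, c i * b2z (x i) then 1 else 0))}

/-- The set `{0ⁿ, e₁, …, e_n}`: the all-zeros vector and the `n` one-hot vectors. -/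
def zeroAndOneHots (n : ℕ) : Finset (Fin n → Bool) :=
  insert (fun _ => false) ((Finset.univ : Finset (Fin n)).image fun i j => decide (j = i))

lemma b2z_nonneg (b : Bool) : 0 ≤ b2z b := by cases b <;> simp [b2z]
lemma b2z_le_one (b : Bool) : b2z b ≤ 1 := by cases b <;> simp [b2z]

lemma sum_onehot {n : ℕ} (v : Fin n → ℤ) (i : Fin n) :
    ∑ j, v j * b2z (decide (j = i)) = v i := by
  rw [Finset.sum_eq_single i]
  · simp [b2z]
  · intro j _ hj; simp [b2z, hj]
  · intro h; exact absurd (Finset.mem_univ i) h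

lemma sum_zero_vec {n : ℕ} (v : Fin n → ℤ) :
    ∑ j, v j * b2z ((fun _ : Fin n => false) j) = 0 := by simp [b2z]

lemma sum_b2z_nonneg {n : ℕ} (x : Fin n → Bool) : 0 ≤ ∑ i, b2z (x i) :=
  Finset.sum_nonneg fun i _ => b2z_nonneg _

lemma one_le_sum_of_true {n : ℕ} {x : Fin n → Bool} {i : Fin n} (h : x i = true) :
    1 ≤ ∑ j, b2z (x j) := by
  have h1 := Finset.single_le_sum (f := fun j => b2z (x j))
    (fun j _ => b2z_nonneg _) (Finset.mem_univ i)
  rw [h] at h1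
  simpa [b2z] using h1

lemma exists_true_of_one_le {n : ℕ} {x : Fin n → Bool}
    (h : 1 ≤ ∑ i, b2z (x i)) : ∃ i, x i = true := by
  by_contra hc
  push_neg at hc
  simp only [Bool.not_eq_true] at hc
  have : ∑ i, b2z (x i) = 0 := Finset.sum_eq_zero fun i _ => by simp [b2z, hc i]
  omega

lemma eq_onehot {n : ℕ} {x : Fin n → Bool} (h1 : ∑ i, b2z (x i) ≤ 1)
    {i : Fin n} (hi : x i = true) : x = fun j => decide (j = i) := by
  have hrest : ∀ j, j ≠ i → x j = false := by
    intro j hj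
    by_contra hjf
    have hjt : x j = true := by simpa using hjf
    have hsub : ({i, j} : Finset (Fin n)) ⊆ Finset.univ := Finset.subset_univ _
    have hle : ∑ k ∈ ({i, j} : Finset (Fin n)), b2z (x k) ≤ ∑ k, b2z (x k) :=
      Finset.sum_le_sum_of_subset_of_nonneg hsub fun k _ _ => b2z_nonneg _
    rw [Finset.sum_pair (Ne.symm hj)] at hle
    rw [hi, hjt] at hle
    have hb1 : b2z true = 1 := rfl
    omega
  funext j
  by_cases hji : j = i
  · subst hji; simp [hi]
  · simp [hrest j hji, hji]

lemma sum_eq_of_all {n : ℕ} {x : Fin n → Bool} {v : Fin n → ℤ} {k : ℤ}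
    (h : ∀ i, x i = true → v i = k) :
    ∑ i, v i * b2z (x i) = k * ∑ i, b2z (x i) := by
  rw [Finset.mul_sum]
  refine Finset.sum_congr rfl fun i _ => ?_
  cases hx : x i
  · simp [b2z]
  · simp [b2z, h i hx]

lemma all_zero_of_sum_nonpos {n : ℕ} {x : Fin n → Bool} {v : Fin n → ℤ}
    (hv : ∀ i, 0 ≤ v i) (h : ∑ i, v i * b2z (x i) ≤ 0) :
    ∀ i, x i = true → v i = 0 := by
  intro i hi
  have hnn : ∀ j ∈ Finset.univ, 0 ≤ v j * b2z (x j) :=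
    fun j _ => mul_nonneg (hv j) (b2z_nonneg _)
  have hz : ∑ j, v j * b2z (x j) = 0 := le_antisymm h (Finset.sum_nonneg hnn)
  have := (Finset.sum_eq_zero_iff_of_nonneg hnn).mp hz i (Finset.mem_univ i)
  simpa [b2z, hi] using this

lemma mem_zero {n : ℕ} : (fun _ => false) ∈ zeroAndOneHots n := Finset.mem_insert_self _ _

lemma mem_onehot {n : ℕ} (i : Fin n) : (fun j => decide (j = i)) ∈ zeroAndOneHots n :=
  Finset.mem_insert_of_mem (Finset.mem_image_of_mem _ (Finset.mem_univ i))

lemma onehot_inj {n : ℕ} : Function.Injective (fun (i : Fin n) (j : Fin n) => decide (j = i)) := by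
  intro i i' h
  have := congrFun h i
  simpa using this.symm

lemma card_zeroAndOneHots (n : ℕ) : (zeroAndOneHots n).card = n + 1 := by
  rw [zeroAndOneHots, Finset.card_insert_of_notMem, Finset.card_image_of_injective _ onehot_inj,
    Finset.card_univ, Fintype.card_fin]
  intro hmem
  obtain ⟨i, _, heq⟩ := Finset.mem_image.mp hmem
  have := congrFun heq i
  simp at this

lemma ORn_zero (n : ℕ) : ORn n (fun _ => false) = false := by simp [ORn, b2z]

lemma sum_b2z_onehot {n : ℕ} (i : Fin n) : ∑ j, b2z (decide (j = i)) = 1 := by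
  have := sum_onehot (fun _ => (1:ℤ)) i
  simpa using this

lemma ORn_onehot {n : ℕ} (i : Fin n) : ORn n (fun j => decide (j = i)) = true := by
  simp only [ORn]
  rw [sum_b2z_onehot i]
  norm_num

lemma isCert_main {n : ℕ} (hn : 1 ≤ n) :
    IsCert (Hthr n) (ORn n) (zeroAndOneHots n) := by
  intro h hH hAg x
  by_cases hx : x ∈ zeroAndOneHots n
  · exact hAg x hx
  obtain ⟨a, c, b, θ, τ, ha, hc, hb, _, _, _, _, hform⟩ := hH
  -- N ≥ 2
  have hN2 : 2 ≤ ∑ i, b2z (x i) := by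
    by_contra hlt
    push_neg at hlt
    by_cases h1 : 1 ≤ ∑ i, b2z (x i)
    · obtain ⟨i, hi⟩ := exists_true_of_one_le h1
      have hxe := eq_onehot (by omega) hi
      exact hx (hxe ▸ mem_onehot i)
    · push_neg at h1
      have hx0 : x = fun _ => false := by
        funext i
        by_contra hxi
        have hxi' : x i = true := by simpa using hxi
        have := one_le_sum_of_true hxi'
        omega
      exact hx (hx0 ▸ mem_zero)
  -- fact from the zero vector
  have h0 := hAg _ (mem_zero (n := n))
  rw [hform, sum_zero_vec a, sum_zero_vec c, ORn_zero, decide_eq_false_iff_not] at h0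
  push_neg at h0
  -- facts from the one-hot vectors
  have F2 : ∀ i : Fin n, θ ≤ a i + b * (if τ ≤ c i then 1 else 0) := by
    intro i
    have hei := hAg _ (mem_onehot i)
    rw [hform, sum_onehot a, sum_onehot c, ORn_onehot, decide_eq_true_eq] at hei
    exact hei
  -- ite elimination
  have hexz : ∀ (d : ℤ), ∃ z : ℤ, (if τ ≤ d then (1:ℤ) else 0) = z ∧ 0 ≤ z ∧ z ≤ 1 ∧ (τ ≤ d ↔ z = 1) := by
    intro d
    by_cases hd : τ ≤ d
    · exact ⟨1, if_pos hd, by norm_num, by norm_num, by simp [hd]⟩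
    · exact ⟨0, if_neg hd, by norm_num, by norm_num, by simp [hd]⟩
  have i0 : Fin n := ⟨0, hn⟩
  have key : θ ≤ (∑ i, a i * b2z (x i)) + b * (if τ ≤ ∑ i, c i * b2z (x i) then 1 else 0) := by
    obtain ⟨z0, hz0eq, hz00, hz01, hz0iff⟩ := hexz 0
    obtain ⟨zx, hzxeq, hzx0, hzx1, hzxiff⟩ := hexz (∑ i, c i * b2z (x i))
    rw [hz0eq] at h0
    rw [hzxeq]
    rcases hb with hb | hb | hb <;> subst hb
    · -- b = -1
      have ha0 : ∀ i, 0 ≤ a i := by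
        intro i
        obtain ⟨zi, hzieq, hzi0, hzi1, _⟩ := hexz (c i)
        have F2i := F2 i; rw [hzieq] at F2i
        omega
      have hA0 : 0 ≤ ∑ i, a i * b2z (x i) :=
        Finset.sum_nonneg fun i _ => mul_nonneg (ha0 i) (b2z_nonneg _)
      rcases le_or_gt 1 θ with hθ1 | hθ1
      · -- θ = 1 : all a i = 1
        have ha1 : ∀ i, x i = true → a i = 1 := by
          intro i _
          obtain ⟨zi, hzieq, hzi0, hzi1, _⟩ := hexz (c i)
          have F2i := F2 i; rw [hzieq] at F2i
          rcases ha i with h' | h' | h' <;> omega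
        have hAeq := sum_eq_of_all ha1
        -- θ ≤ 1 from F2 at i0
        obtain ⟨zi, hzieq, hzi0, hzi1, _⟩ := hexz (c i0)
        have F2i := F2 i0; rw [hzieq] at F2i
        rcases ha i0 with h' | h' | h' <;> omega
      · -- θ = 0
        have hzxc : zx = 0 ∨ zx = 1 := by omega
        rcases hzxc with hz | hz
        · omega
        · by_contra hcon
          push_neg at hcon
          have hAle : ∑ i, a i * b2z (x i) ≤ 0 := by omega
          have hz0' : z0 = 1 := by omega
          have hτ0 : τ ≤ 0 := hz0iff.mpr hz0'
          have hzero := all_zero_of_sum_nonpos ha0 hAle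
          have hci : ∀ i, x i = true → c i = -1 ∧ c i < τ := by
            intro i hi
            obtain ⟨zi, hzieq, hzi0, hzi1, hziiff⟩ := hexz (c i)
            have F2i := F2 i; rw [hzieq] at F2i
            have hai := hzero i hi
            have hzz : zi = 0 := by omega
            have hnτ : ¬ (τ ≤ c i) := fun hh => by omega
            rcases hc i with h' | h' | h' <;> omega
          obtain ⟨i1, hi1⟩ := exists_true_of_one_le (by omega : 1 ≤ ∑ i, b2z (x i))
          have hCeq := sum_eq_of_all (fun i hi => (hci i hi).1)
          have hτC : τ ≤ ∑ i, c i * b2z (x i) := hzxiff.mpr hz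
          have := (hci i1 hi1).2
          have := (hci i1 hi1).1
          omega
    · -- b = 0
      have hθ1 : 1 ≤ θ := by omega
      have ha1 : ∀ i, x i = true → a i = 1 := by
        intro i _
        have F2i := F2 i
        rcases ha i with h' | h' | h' <;> omega
      have hAeq := sum_eq_of_all ha1
      have F2i := F2 i0
      rcases ha i0 with h' | h' | h' <;> omega
    · -- b = 1
      have hθ1 : 1 ≤ θ := by omega
      have ha0 : ∀ i, 0 ≤ a i := by
        intro i
        obtain ⟨zi, hzieq, hzi0, hzi1, _⟩ := hexz (c i)
        have F2i := F2 i; rw [hzieq] at F2i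
        omega
      have hA0 : 0 ≤ ∑ i, a i * b2z (x i) :=
        Finset.sum_nonneg fun i _ => mul_nonneg (ha0 i) (b2z_nonneg _)
      rcases le_or_gt 2 θ with hθ2 | hθ2
      · -- θ = 2 : all a i = 1
        have ha1 : ∀ i, x i = true → a i = 1 := by
          intro i _
          obtain ⟨zi, hzieq, hzi0, hzi1, _⟩ := hexz (c i)
          have F2i := F2 i; rw [hzieq] at F2i
          rcases ha i with h' | h' | h' <;> omega
        have hAeq := sum_eq_of_all ha1
        -- θ ≤ 2
        obtain ⟨zi, hzieq, hzi0, hzi1, _⟩ := hexz (c i0)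
        have F2i := F2 i0; rw [hzieq] at F2i
        rcases ha i0 with h' | h' | h' <;> omega
      · rcases le_or_gt 1 (∑ i, a i * b2z (x i)) with hA1 | hA1
        · omega
        · -- A = 0, θ = 1
          have hAle : ∑ i, a i * b2z (x i) ≤ 0 := by omega
          have hzero := all_zero_of_sum_nonpos ha0 hAle
          have hτ1 : 1 ≤ τ := by
            have hz0' : z0 = 0 := by omega
            by_contra hτ
            push_neg at hτ
            have : z0 = 1 := hz0iff.mp (by omega)
            omega
          have hci : ∀ i, x i = true → c i = 1 ∧ τ ≤ c i := by
            intro i hi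
            obtain ⟨zi, hzieq, hzi0, hzi1, hziiff⟩ := hexz (c i)
            have F2i := F2 i; rw [hzieq] at F2i
            have hai := hzero i hi
            have hzz : zi = 1 := by omega
            have hτc : τ ≤ c i := hziiff.mpr hzz
            rcases hc i with h' | h' | h' <;> omega
          obtain ⟨i1, hi1⟩ := exists_true_of_one_le (by omega : 1 ≤ ∑ i, b2z (x i))
          have hCeq := sum_eq_of_all (fun i hi => (hci i hi).1)
          have hτc1 := (hci i1 hi1).2
          have hc1 := (hci i1 hi1).1
          have hzx' : zx = 1 := hzxiff.mp (by omega)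
          omega
  rw [hform x]
  simp only [ORn]
  rw [decide_eq_decide]
  exact iff_of_true key (by omega)

lemma subset_of_isCert {n : ℕ} {T : Finset (Fin n → Bool)}
    (hT : IsCert (Hthr n) (ORn n) T) : zeroAndOneHots n ⊆ T := by
  intro s hs
  rw [zeroAndOneHots, Finset.mem_insert] at hs
  rcases hs with rfl | hs
  · -- zero vector must be in T
    by_contra h0
    have hmem : (fun _ : Fin n → Bool => true) ∈ Hthr n := by
      refine ⟨fun _ => 0, fun _ => 0, 0, 0, 0, fun i => Or.inr (Or.inl rfl),
        fun i => Or.inr (Or.inl rfl), Or.inr (Or.inl rfl), by omega, by omega, by omega, by omega,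
        fun x => ?_⟩
      simp [b2z]
    have hagree : ∀ t ∈ T, (fun _ : Fin n → Bool => true) t = ORn n t := by
      intro t ht
      have htne : t ≠ (fun _ => false) := fun he => h0 (he ▸ ht)
      obtain ⟨i, hi⟩ : ∃ i, t i = true := by
        by_contra hcon
        push_neg at hcon
        simp only [Bool.not_eq_true] at hcon
        exact htne (funext fun i => hcon i)
      have h1 := one_le_sum_of_true hi
      simp [ORn, h1]
    have hfin := hT _ hmem hagree (fun _ => false)
    rw [ORn_zero] at hfin
    simp at hfin
  · obtain ⟨i, _, rfl⟩ := Finset.mem_image.mp hs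
    by_contra hei
    set g : (Fin n → Bool) → Bool :=
      fun x => decide ((1:ℤ) ≤ ∑ j, (if j = i then 0 else 1) * b2z (x j)) with hg
    have hmem : g ∈ Hthr n := by
      refine ⟨fun j => if j = i then 0 else 1, fun _ => 0, 0, 1, 0,
        fun j => by by_cases hji : j = i <;> simp [hji], fun j => Or.inr (Or.inl rfl), Or.inr (Or.inl rfl),
        by omega, by omega, by omega, by omega, fun x => ?_⟩
      simp [hg]
    have hagree : ∀ t ∈ T, g t = ORn n t := by
      intro t ht
      have htne : t ≠ (fun j => decide (j = i)) := fun he => hei (he ▸ ht)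
      by_cases hj : ∃ j, j ≠ i ∧ t j = true
      · obtain ⟨j, hji, htj⟩ := hj
        have h1 := one_le_sum_of_true htj
        have h2 : 1 ≤ ∑ k, (if k = i then 0 else (1:ℤ)) * b2z (t k) := by
          have hnn : ∀ k ∈ Finset.univ, 0 ≤ (if k = i then 0 else (1:ℤ)) * b2z (t k) :=
            fun k _ => mul_nonneg (by split <;> norm_num) (b2z_nonneg _)
          have hle := Finset.single_le_sum hnn (Finset.mem_univ j)
          rw [if_neg hji, htj] at hle
          have hb1 : b2z true = 1 := rfl
          omega
        simp only [hg, ORn]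
        rw [decide_eq_decide]
        exact iff_of_true h2 h1
      · push_neg at hj
        have hfalse : ∀ j, j ≠ i → t j = false := by
          intro j hji
          have := hj j hji
          simpa using this
        have hti : t i = false := by
          by_contra h'
          have hti' : t i = true := by simpa using h'
          refine htne (funext fun j => ?_)
          by_cases hji : j = i
          · subst hji; simp [hti']
          · simp [hfalse j hji, hji]
        have hN : ∑ k, b2z (t k) = 0 := Finset.sum_eq_zero fun k _ => by
          by_cases hk : k = i
          · subst hk; simp [b2z, hti]
          · simp [b2z, hfalse k hk]
        have hM : ∑ k, (if k = i then 0 else (1:ℤ)) * b2z (t k) = 0 :=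
          Finset.sum_eq_zero fun k _ => by
            by_cases hk : k = i
            · subst hk; simp [b2z, hti]
            · simp [b2z, hfalse k hk]
        simp only [hg, ORn]
        rw [decide_eq_decide]
        exact iff_of_false (by omega) (by omega)
    have hfin := hT _ hmem hagree (fun j => decide (j = i))
    rw [ORn_onehot] at hfin
    have hgz : ∑ k, (if k = i then 0 else (1:ℤ)) * b2z (decide (k = i)) = 0 :=
      Finset.sum_eq_zero fun k _ => by
        by_cases hk : k = i
        · subst hk; simp
        · simp [b2z, hk]
    rw [hg] at hfin
    simp only [hgz] at hfin
    norm_num at hfin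


/-- **Certification of `OR_n` in the restricted depth-2 threshold base class.**
`cert(OR_n, H) = n + 1`, and `{0ⁿ, e₁, …, e_n}` is a certificate for `OR_n` in `H`. -/
theorem stmt8 {n : ℕ} (hn : 1 ≤ n) :
    cert (Hthr n) (ORn n) = n + 1 ∧ IsCert (Hthr n) (ORn n) (zeroAndOneHots n) := by
  have hcert := isCert_main hn
  have hcard := card_zeroAndOneHots n
  refine ⟨le_antisymm ?_ ?_, hcert⟩
  · exact Nat.sInf_le ⟨zeroAndOneHots n, hcard, hcert⟩
  · refine le_csInf ⟨n + 1, zeroAndOneHots n, hcard, hcert⟩ ?_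
    rintro k ⟨S, rfl, hS⟩
    calc n + 1 = (zeroAndOneHots n).card := hcard.symm
      _ ≤ S.card := Finset.card_le_card (subset_of_isCert hS)
end

section
/- Parameter-counting certificate bound: Let X be a domain, let P be a finite nonempty parameter set, and let Φ : P → (X → Bool) be any map with image H = Φ(P). Then there exists f ∈ H with cert(f, H) ≤ ⌈log₂ |P|⌉. In particular, a hypothesis class described by N parameter slots each taking at most D values contains a hypothesis with certificate size at most ⌈N · log₂ D⌉. -/
/-!
Halving: in a class with two distinct hypotheses some point `x` splits it into two nonempty
parts, one of which holds at most half of the class. Querying `x` and recursing into that part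
yields a hypothesis `f` together with a certificate for it of size at most `⌈log₂ |H|⌉`, and a
parametrized class has `|H| ≤ |P|`.
-/

open Finset

theorem Nat.clog_add_one_le_of_mul_le {b m n : ℕ} (hb : 1 < b) (hm : 0 < m) (h : b * m ≤ n) :
    Nat.clog b m + 1 ≤ Nat.clog b n := by
  have hn : 2 ≤ n := by have := Nat.mul_le_mul hb hm; omega
  rw [Nat.clog_of_two_le hb hn]
  have hm_le : m ≤ (n + b - 1) / b :=
    (Nat.le_div_iff_mul_le (by omega)).2 (by rw [mul_comm]; omega)
  exact Nat.add_le_add_right (Nat.clog_mono_right b hm_le) 1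

theorem Nat.clog_le_ceil_logb {b : ℕ} (hb : 1 < b) (n : ℕ) :
    Nat.clog b n ≤ ⌈Real.logb b n⌉₊ := by
  rw [Nat.clog_le_iff_le_pow hb]
  rcases n.eq_zero_or_pos with rfl | hn
  · exact Nat.zero_le _
  have hb' : (1 : ℝ) < b := by exact_mod_cast hb
  exact_mod_cast calc (n : ℝ) = (b : ℝ) ^ Real.logb b n :=
        (Real.rpow_logb (by positivity) hb'.ne' (by exact_mod_cast hn)).symm
    _ ≤ (b : ℝ) ^ (⌈Real.logb b n⌉₊ : ℝ) :=
        Real.rpow_le_rpow_of_exponent_le hb'.le (Nat.le_ceil _)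
    _ = (b : ℝ) ^ ⌈Real.logb b n⌉₊ := Real.rpow_natCast _ _

theorem Finset.exists_two_mul_card_filter_eq_le {α : Type*} (s : Finset α) (g : α → Bool) :
    ∃ b, 2 * #(s.filter (g · = b)) ≤ #s := by
  have hsplit := s.card_filter_add_card_filter_not (g · = true)
  simp only [Bool.not_eq_true] at hsplit
  by_cases htrue : 2 * #(s.filter (g · = true)) ≤ #s
  · exact ⟨true, htrue⟩
  · exact ⟨false, by omega⟩

section Certificates

variable {X : Type*} {H : Set (X → Bool)} {f : X → Bool} {S : Finset X}

theorem IsCert.cert_le (hS : IsCert H f S) : cert H f ≤ #S :=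
  Nat.sInf_le ⟨S, rfl, hS⟩

theorem isCert_empty_of_subsingleton (hH : H.Subsingleton) (hf : f ∈ H) : IsCert H f ∅ :=
  fun h hh _ x => by rw [hH hh hf]

theorem IsCert.insert [DecidableEq X] {x : X} (hS : IsCert {h ∈ H | h x = f x} f S) :
    IsCert H f (insert x S) := fun h hh hagree =>
  hS h ⟨hh, hagree x (mem_insert_self x S)⟩ fun y hy => hagree y (mem_insert_of_mem hy)

theorem Finset.exists_isCert_card_le_clog [DecidableEq X] (H : Finset (X → Bool))
    (hH : H.Nonempty) :
    ∃ f ∈ H, ∃ S : Finset X, #S ≤ Nat.clog 2 #H ∧ IsCert ↑H f S := by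
  induction H using Finset.strongInduction with
  | H H ih =>
  by_cases hsub : (H : Set (X → Bool)).Subsingleton
  · obtain ⟨f, hf⟩ := hH
    exact ⟨f, hf, ∅, Nat.zero_le _, isCert_empty_of_subsingleton hsub hf⟩
  obtain ⟨h₁, hh₁, h₂, hh₂, hne⟩ := Set.not_subsingleton_iff.1 hsub
  obtain ⟨x, hx⟩ := Function.ne_iff.1 hne
  obtain ⟨b, hhalf⟩ := H.exists_two_mul_card_filter_eq_le (· x)
  set F := H.filter (· x = b)
  have hF : F.Nonempty ∧ F ⊂ H := by
    by_cases hb : h₁ x = b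
    · exact ⟨⟨h₁, mem_filter.2 ⟨hh₁, hb⟩⟩,
        filter_ssubset.2 ⟨h₂, hh₂, fun h => hx (hb.trans h.symm)⟩⟩
    · have h₂b : h₂ x = b := by
        revert hb hx; cases h₁ x <;> cases h₂ x <;> cases b <;> decide
      exact ⟨⟨h₂, mem_filter.2 ⟨hh₂, h₂b⟩⟩, filter_ssubset.2 ⟨h₁, hh₁, hb⟩⟩
  obtain ⟨f, hfF, S, hScard, hS⟩ := ih F hF.2 hF.1
  obtain ⟨hf, hfx⟩ := mem_filter.1 hfF
  refine ⟨f, hf, insert x S, ?_, ?_⟩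
  · calc #(insert x S) ≤ #S + 1 := card_insert_le x S
      _ ≤ Nat.clog 2 #F + 1 := by omega
      _ ≤ Nat.clog 2 #H := Nat.clog_add_one_le_of_mul_le one_lt_two hF.1.card_pos hhalf
  · apply IsCert.insert
    rw [hfx]
    simpa only [F, coe_filter, mem_coe] using hS

end Certificates

theorem exists_cert_range_le_clog_card {X P : Type*} [Fintype P] [Nonempty P]
    (Φ : P → X → Bool) :
    ∃ f ∈ Set.range Φ, cert (Set.range Φ) f ≤ Nat.clog 2 (Fintype.card P) := by
  classical
  have hrange : Set.range Φ = ↑(univ.image Φ) := by simp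
  obtain ⟨f, hf, S, hScard, hS⟩ :=
    (univ.image Φ).exists_isCert_card_le_clog (univ_nonempty.image Φ)
  rw [hrange]
  exact ⟨f, hf, hS.cert_le.trans <| hScard.trans <| Nat.clog_mono_right 2 card_image_le⟩

/-- **Parameter-counting certificate bound.** If `H` is the image of a finite nonempty
parameter set `P` under a parametrization `Φ`, then some `f ∈ H` has certificate size
at most `⌈log₂ |P|⌉`. In particular, a class described by `N` parameter slots each
taking at most `D ≥ 1` values contains a hypothesis with certificate size at most
`⌈N · log₂ D⌉`. -/
theorem stmt14 {X : Type*} :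
    (∀ (P : Type*) [Fintype P] [Nonempty P] (Φ : P → X → Bool),
      ∃ f ∈ Set.range Φ, cert (Set.range Φ) f ≤ Nat.clog 2 (Fintype.card P)) ∧
    (∀ (N D : ℕ), 1 ≤ D → ∀ Ψ : (Fin N → Fin D) → X → Bool,
      ∃ f ∈ Set.range Ψ, cert (Set.range Ψ) f ≤ ⌈(N : ℝ) * Real.logb 2 D⌉₊) := by
  refine ⟨fun P _ _ Φ => exists_cert_range_le_clog_card Φ, fun N D hD Ψ => ?_⟩
  have : Nonempty (Fin D) := ⟨⟨0, hD⟩⟩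
  obtain ⟨f, hf, hle⟩ := exists_cert_range_le_clog_card Ψ
  refine ⟨f, hf, hle.trans ?_⟩
  calc Nat.clog 2 (Fintype.card (Fin N → Fin D)) = Nat.clog 2 (D ^ N) := by simp
    _ ≤ ⌈Real.logb 2 ((D ^ N : ℕ) : ℝ)⌉₊ := Nat.clog_le_ceil_logb one_lt_two _
    _ = ⌈(N : ℝ) * Real.logb 2 D⌉₊ := by rw [Nat.cast_pow, Real.logb_pow]
end

section
/- Near-perfect accuracy certification is exponentially expensive: Let n ≥ 3, let f⋆ : {0,1}^n → Bool, and let H be a set of functions {0,1}^n → Bool that contains f⋆ and, for every subset I ⊆ Fin n, every pattern π : I → {0,1}, and every σ ∈ Bool, contains the block override g_{π,σ} defined by g_{π,σ}(x) = σ if x_i = π_i for all i ∈ I and g_{π,σ}(x) = f⋆(x) otherwise. Then for every natural number R with R + 1 ≤ 2^{n−2}, cert_R(f⋆, H) ≥ 2^n / (4(R + 1)). In particular, if R = poly(n) then cert_R grows as 2^n / poly(n). -/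
lemma blockCard {n : ℕ} (I : Finset (Fin n)) (π : Fin n → Bool) :
    (Finset.univ.filter fun x : Fin n → Bool => ∀ i ∈ I, x i = π i).card
      = 2 ^ (n - I.card) := by
  classical
  rw [← Fintype.card_subtype]
  have e : {x : Fin n → Bool // ∀ i ∈ I, x i = π i} ≃ ({i : Fin n // i ∉ I} → Bool) :=
    { toFun := fun x j => x.1 j.1
      invFun := fun g => ⟨fun i => if h : i ∈ I then π i else g ⟨i, h⟩, by
        intro i hi; simp [hi]⟩
      left_inv := by
        rintro ⟨x, hx⟩
        ext i
        by_cases h : i ∈ I <;> simp [h, hx i]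
      right_inv := by
        intro g; ext j; simp [j.2] }
  rw [Fintype.card_congr e, Fintype.card_fun, Fintype.card_subtype_compl,
    Fintype.card_coe, Fintype.card_fin, Fintype.card_bool]

/-- **Near-perfect accuracy certification is exponentially expensive.** Let `n ≥ 3` and
let `H` contain the target `f` together with every block override `g_{π,σ}` (for every
trigger set `I`, pattern `π`, and label `σ`). Then for every `R` with `R + 1 ≤ 2^{n−2}`,
`cert_R(f, H) ≥ 2ⁿ / (4(R + 1))`. -/
theorem stmt16 {n : ℕ} (hn : 3 ≤ n) (f : (Fin n → Bool) → Bool)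
    (H : Set ((Fin n → Bool) → Bool)) (hf : f ∈ H)
    (hov : ∀ (I : Finset (Fin n)) (π : Fin n → Bool) (σ : Bool),
      (fun x => if ∀ i ∈ I, x i = π i then σ else f x) ∈ H)
    (R : ℕ) (hR : R + 1 ≤ 2 ^ (n - 2)) :
    (2 : ℝ) ^ n / (4 * ((R : ℝ) + 1)) ≤ (certAbs H f R : ℝ) := by
  classical
  set t := Nat.log 2 (R + 1) with ht
  have ht1 : 2 ^ t ≤ R + 1 := Nat.pow_log_le_self 2 (by omega)
  have ht2 : R + 1 < 2 ^ (t + 1) := Nat.lt_pow_succ_log_self (by norm_num) _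
  have htn : t + 2 ≤ n := by
    have h1 : 2 ^ t ≤ 2 ^ (n - 2) := le_trans ht1 hR
    have h2 : t ≤ n - 2 := (Nat.pow_le_pow_iff_right (by norm_num)).mp h1
    omega
  set k := n - t - 2 with hk
  have hkn : k + (t + 2) = n := by omega
  -- Step 1: every certifying set has at least 2^k elements
  have key : ∀ m ∈ {m : ℕ | ∃ S : Finset (Fin n → Bool), S.card = m ∧
      ∀ h ∈ H, (∀ x ∈ S, h x = f x) → errCount f h ≤ R}, 2 ^ k ≤ m := by
    rintro m ⟨S, rfl, hS⟩
    set I : Finset (Fin n) := Finset.univ.filter (fun i => (i : ℕ) < k) with hI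
    have hkn' : k ≤ n := by omega
    have hIcard : I.card = k := by
      have heq : I = Finset.attachFin (Finset.range k)
          (fun m hm => by simp at hm; omega) := by
        ext i
        simp [hI, Finset.mem_attachFin]
      rw [heq, Finset.card_attachFin, Finset.card_range]
    -- for each pattern p on the first k coordinates, S meets the block
    have hit : ∀ p : Fin k → Bool, ∃ x ∈ S,
        ∀ i ∈ I, x i = (fun i : Fin n => if h : (i : ℕ) < k then p ⟨i, h⟩ else false) i := by
      intro p
      by_contra hcon
      push_neg at hcon
      set π : Fin n → Bool := fun i => if h : (i : ℕ) < k then p ⟨i, h⟩ else false with hπ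
      set B := Finset.univ.filter (fun x : Fin n → Bool => ∀ i ∈ I, x i = π i) with hB
      have hBcard : B.card = 2 ^ (t + 2) := by
        rw [hB, blockCard, hIcard]; congr 1; omega
      have hsplit : (B.filter (fun x => f x ≠ true)).card
          + (B.filter (fun x => f x ≠ false)).card = 2 ^ (t + 2) := by
        have h0 := Finset.card_filter_add_card_filter_not
          (s := B) (p := fun x => f x ≠ true)
        have heq2 : B.filter (fun x => ¬ f x ≠ true) = B.filter (fun x => f x ≠ false) := by
          apply Finset.filter_congr
          intro x _
          cases f x <;> simp
        rw [heq2] at h0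
        omega
      have hσ : ∃ σ : Bool, 2 ^ (t + 1) ≤ (B.filter (fun x => f x ≠ σ)).card := by
        by_contra hc
        push_neg at hc
        have h1 := hc true
        have h2 := hc false
        have : 2 ^ (t + 2) = 2 ^ (t + 1) + 2 ^ (t + 1) := by ring
        omega
      obtain ⟨σ, hσ⟩ := hσ
      set g : (Fin n → Bool) → Bool := fun x => if ∀ i ∈ I, x i = π i then σ else f x with hg
      have hgH : g ∈ H := hov I π σ
      have hagree : ∀ x ∈ S, g x = f x := by
        intro x hx
        have hnot : ¬ ∀ i ∈ I, x i = π i := by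
          intro hall
          obtain ⟨i, hi, hne⟩ := hcon x hx
          exact hne (hall i hi)
        rw [hg]
        simp only
        rw [if_neg hnot]
      have herr := hS g hgH hagree
      have hsub : B.filter (fun x => f x ≠ σ) ⊆
          Finset.univ.filter (fun x : Fin n → Bool => g x ≠ f x) := by
        intro x hx
        simp only [hB, Finset.mem_filter, Finset.mem_univ, true_and] at hx ⊢
        rw [hg]
        simp only
        rw [if_pos hx.1]
        exact fun h => hx.2 h.symm
      have : 2 ^ (t + 1) ≤ errCount f g :=
        le_trans hσ (Finset.card_le_card hsub)
      omega
    -- define injection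
    choose F hFS hFeq using hit
    have hinj : Function.Injective F := by
      intro p q hpq
      funext j
      have h1 := hFeq p ⟨j, j.2.trans_le (by omega)⟩ (by simp [hI, j.2])
      have h2 := hFeq q ⟨j, j.2.trans_le (by omega)⟩ (by simp [hI, j.2])
      simp only [j.2, dif_pos] at h1 h2
      rw [← h1, hpq, h2]
    calc 2 ^ k = Fintype.card (Fin k → Bool) := by
            rw [Fintype.card_fun, Fintype.card_bool, Fintype.card_fin]
      _ ≤ S.card := by
            apply Finset.card_le_card_of_injOn F (fun p _ => hFS p)
            exact fun a _ b _ h => hinj h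
  -- Step 2: the cert set is nonempty, so sInf ≥ 2^k
  have hne : {m : ℕ | ∃ S : Finset (Fin n → Bool), S.card = m ∧
      ∀ h ∈ H, (∀ x ∈ S, h x = f x) → errCount f h ≤ R}.Nonempty := by
    refine ⟨Finset.univ.card, Finset.univ, rfl, ?_⟩
    intro h _ hag
    have : errCount f h = 0 := by
      rw [errCount, Finset.card_eq_zero, Finset.filter_eq_empty_iff]
      intro x _
      simp [hag x (Finset.mem_univ x)]
    omega
  have hcert : 2 ^ k ≤ certAbs H f R := le_csInf hne key
  -- Step 3: real arithmetic
  have hRpos : (0 : ℝ) < 4 * ((R : ℝ) + 1) := by positivity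
  rw [div_le_iff₀ hRpos]
  have h2n : (2 : ℝ) ^ n = 2 ^ k * 2 ^ (t + 2) := by
    rw [← pow_add, hkn]
  rw [h2n]
  have hc : ((2 : ℕ) ^ k : ℝ) ≤ (certAbs H f R : ℝ) := by exact_mod_cast hcert
  have h4 : (2 : ℝ) ^ (t + 2) ≤ 4 * ((R : ℝ) + 1) := by
    have : (2 : ℕ) ^ (t + 2) ≤ 4 * (R + 1) := by
      have : (2 : ℕ) ^ (t + 2) = 4 * 2 ^ t := by ring
      omega
    exact_mod_cast this
  calc (2 : ℝ) ^ k * 2 ^ (t + 2) ≤ (certAbs H f R : ℝ) * (4 * ((R : ℝ) + 1)) := by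
        apply mul_le_mul _ h4 (by positivity) (by positivity)
        exact_mod_cast hcert
end
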